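/- arXiv:1704.07883 — 5 statements merged into one kernel-verified Lean document; each statement's English description precedes it below -/
import Mathlib

section
/- Let A be a set of agents, G₀ a set (of initial states/schedules), and let (S_F, (∼_a)_{a∈A}) and (S_P, (≈_a)_{a∈A}) be Kripke frames, with (S_P, (≈_a)) proper. Let F : G₀ → S_F be surjective and P : G₀ → S_P be such that for all x, y ∈ G₀ and all a ∈ A, F(x) ∼_a F(y) implies P(x) ≈_a P(y) (the full-information protocol F distinguishes at least as much as protocol P). Then there exists a Kripke frame morphism f : S_F → S_P with f(F(x)) = P(x) for all x ∈ G₀. -/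
/-- The full-information protocol is initial: if `F : G₀ → S_F` is surjective
and `P : G₀ → S_P` is a protocol into a proper Kripke frame such that `F`
distinguishes at least as much as `P` (i.e. `F x ∼_a F y → P x ≈_a P y`),
then there is a Kripke frame morphism `f : S_F → S_P` with `f ∘ F = P`. -/
theorem full_information_protocol_initial
    {A G₀ SF SP : Type*}
    (RF : A → SF → SF → Prop) (RP : A → SP → SP → Prop)
    (hRF : ∀ a, Equivalence (RF a)) (hRP : ∀ a, Equivalence (RP a))
    (hproper : ∀ x y : SP, (∀ a, RP a x y) → x = y)
    (F : G₀ → SF) (hF : Function.Surjective F)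
    (P : G₀ → SP)
    (hFP : ∀ (x y : G₀) (a : A), RF a (F x) (F y) → RP a (P x) (P y)) :
    ∃ f : SF → SP,
      (∀ a (u v : SF), RF a u v → RP a (f u) (f v)) ∧
      (∀ x : G₀, f (F x) = P x) := by
  have key : ∀ x y : G₀, F x = F y → P x = P y := by
    intro x y h
    exact hproper _ _ fun a => hFP x y a (h ▸ (hRF a).refl (F x))
  refine ⟨fun u => P (hF u).choose, ?_, ?_⟩
  · intro a u v huv
    have hu := (hF u).choose_spec
    have hv := (hF v).choose_spec
    exact hFP _ _ a (by rwa [hu, hv])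
  · intro x
    exact key _ _ (hF (F x)).choose_spec
end

section
/- Let A be a set of agents, G₀ a set of initial states, (S_F, (∼_a)), (S_P, (≈_a)) and (O, (≋_a)) Kripke frames with (S_P, (≈_a)) proper, F : G₀ → S_F surjective, P : G₀ → S_P such that F(x) ∼_a F(y) implies P(x) ≈_a P(y) for all x, y ∈ G₀ and a ∈ A, and Δ : G₀ → Set O a task relation. If there exists a Kripke frame morphism f' : S_P → O with f'(P(x)) ∈ Δ(x) for all x ∈ G₀ (the task is solvable by protocol P), then there exists a Kripke frame morphism g : S_F → O with g(F(x)) ∈ Δ(x) for all x ∈ G₀ (the task is solvable by the full-information protocol F). -/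
/-- If an inputless task `Δ : G₀ → Set O` is solvable in `N` steps by a
protocol `P` (with a Kripke frame morphism `f' : S_P → O` such that
`f'(P x) ∈ Δ x`), then it is solvable by the full-information protocol `F`. -/
theorem full_information_solves_if_solvable
    {A G₀ SF SP O : Type*}
    (RF : A → SF → SF → Prop) (RP : A → SP → SP → Prop)
    (RO : A → O → O → Prop)
    (hRF : ∀ a, Equivalence (RF a)) (hRP : ∀ a, Equivalence (RP a))
    (hRO : ∀ a, Equivalence (RO a))
    (hproper : ∀ x y : SP, (∀ a, RP a x y) → x = y)
    (F : G₀ → SF) (hF : Function.Surjective F)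
    (P : G₀ → SP)
    (hFP : ∀ (x y : G₀) (a : A), RF a (F x) (F y) → RP a (P x) (P y))
    (Δ : G₀ → Set O)
    (hsolv : ∃ f' : SP → O,
      (∀ a (u v : SP), RP a u v → RO a (f' u) (f' v)) ∧
      (∀ x : G₀, f' (P x) ∈ Δ x)) :
    ∃ g : SF → O,
      (∀ a (u v : SF), RF a u v → RO a (g u) (g v)) ∧
      (∀ x : G₀, g (F x) ∈ Δ x) := by
  obtain ⟨f', hmor, hΔ⟩ := hsolv
  set sec : SF → G₀ := fun s => (hF s).choose with hsec
  have hsecF : ∀ s, F (sec s) = s := fun s => (hF s).choose_spec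
  have key : ∀ x : G₀, P (sec (F x)) = P x := by
    intro x
    apply hproper
    intro a
    apply hFP
    rw [hsecF]
    exact (hRF a).refl _
  refine ⟨fun s => f' (P (sec s)), ?_, ?_⟩
  · intro a u v huv
    apply hmor
    apply hFP
    rw [hsecF, hsecF]
    exact huv
  · intro x
    show f' (P (sec (F x))) ∈ Δ x
    rw [key]
    exact hΔ x
end

section
/- Let (S, (∼_a)_{a∈A}) be a proper Kripke frame over a finite set A of agents of cardinality n+1. For each state s ∈ S define χ(s) = {(a, [s]_a) | a ∈ A}, where [s]_a denotes the ∼_a-equivalence class of s, a subset of the vertex set A × (classes). Then the family C consisting of all nonempty subsets of the sets χ(s), s ∈ S, is a pure chromatic simplicial complex of dimension n under the coloring (a, c) ↦ a: C is downward closed, every χ(s) has cardinality n+1 with pairwise distinct colors, and the facets of C are exactly the sets χ(s) (in particular χ(s) ⊆ χ(s') implies s = s'). -/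
/-- The simplicial complex associated to a proper Kripke frame
`(S, (∼_a)_{a ∈ A})` over a finite set `A` of `n+1` agents: vertices are
pairs `(a, [s]_a)` of an agent and a `∼_a`-equivalence class,
`χ s = {(a, [s]_a) | a ∈ A}`, and the faces are all nonempty subsets of the
sets `χ s`. This family is downward closed, every `χ s` has cardinality
`n+1` with pairwise distinct colors under the coloring `(a, c) ↦ a`, and the
facets (maximal faces) are exactly the sets `χ s`; in particular
`χ s ⊆ χ s'` implies `s = s'`. Hence it is a pure chromatic simplicial
complex of dimension `n`. -/
theorem complex_of_proper_kripke_frame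
    {A S : Type*} [Fintype A] (n : ℕ) (hA : Fintype.card A = n + 1)
    (R : A → S → S → Prop) (hR : ∀ a, Equivalence (R a))
    (hproper : ∀ s s' : S, (∀ a, R a s s') → s = s')
    (χ : S → Set (A × Set S))
    (hχ : ∀ s, χ s = {p | ∃ a : A, p = (a, {t | R a s t})})
    (C : Set (Set (A × Set S)))
    (hC : C = {X | X.Nonempty ∧ ∃ s : S, X ⊆ χ s}) :
    -- downward closed
    (∀ X ∈ C, ∀ Y : Set (A × Set S), Y ⊆ X → Y.Nonempty → Y ∈ C) ∧
    -- every χ s is a face with exactly n+1 vertices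
    (∀ s : S, χ s ∈ C ∧ (χ s).ncard = n + 1) ∧
    -- the colors (first components) of the vertices of χ s are pairwise
    -- distinct, i.e. the coloring (a, c) ↦ a is injective on each face
    (∀ s : S, ∀ p ∈ χ s, ∀ q ∈ χ s, p.1 = q.1 → p = q) ∧
    -- the facets of C are exactly the sets χ s
    (∀ X : Set (A × Set S),
        (X ∈ C ∧ ∀ Y ∈ C, X ⊆ Y → X = Y) ↔ ∃ s : S, X = χ s) ∧
    -- in particular χ s ⊆ χ s' implies s = s'
    (∀ s s' : S, χ s ⊆ χ s' → s = s') := by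
  have hAne : Nonempty A := by
    rw [← Fintype.card_pos_iff, hA]; omega
  have hmem : ∀ s a, (a, {t | R a s t}) ∈ χ s := by
    intro s a; rw [hχ]; exact ⟨a, rfl⟩
  have hsub : ∀ s s', χ s ⊆ χ s' → s = s' := by
    intro s s' h
    refine (hproper s' s fun a => ?_).symm
    have h2 := h (hmem s a)
    rw [hχ] at h2
    obtain ⟨b, hb⟩ := h2
    obtain rfl : a = b := congrArg Prod.fst hb
    have hset : {t | R a s t} = {t | R a s' t} := congrArg Prod.snd hb
    have : s ∈ {t | R a s' t} := hset ▸ ((hR a).refl s)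
    exact this
  have hrange : ∀ s, χ s = Set.range (fun a : A => (a, {t | R a s t})) := by
    intro s; rw [hχ]; ext p; simp [eq_comm, Set.range]
  have hCmem : ∀ s, χ s ∈ C := by
    intro s
    rw [hC]
    exact ⟨⟨_, hmem s (Classical.arbitrary A)⟩, s, subset_rfl⟩
  refine ⟨?_, ?_, ?_, ?_, hsub⟩
  · intro X hX Y hYX hYne
    rw [hC] at hX ⊢
    obtain ⟨_, s, hs⟩ := hX
    exact ⟨hYne, s, hYX.trans hs⟩
  · intro s
    refine ⟨hCmem s, ?_⟩
    rw [hrange, ← Set.image_univ,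
      Set.ncard_image_of_injective _ (fun a b hab => congrArg Prod.fst hab),
      Set.ncard_univ, Nat.card_eq_fintype_card, hA]
  · intro s p hp q hq hpq
    rw [hχ] at hp hq
    obtain ⟨a, rfl⟩ := hp
    obtain ⟨b, rfl⟩ := hq
    obtain rfl : a = b := hpq
    rfl
  · intro X
    constructor
    · rintro ⟨hX, hmax⟩
      rw [hC] at hX
      obtain ⟨_, s, hs⟩ := hX
      exact ⟨s, hmax _ (hCmem s) hs⟩
    · rintro ⟨s, rfl⟩
      refine ⟨hCmem s, fun Y hY hsY => ?_⟩
      rw [hC] at hY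
      obtain ⟨_, s', hs'⟩ := hY
      obtain rfl := hsub s s' (hsY.trans hs')
      exact hsY.antisymm hs'
end

section
/- Let C and D be pure chromatic simplicial complexes of dimension n with colorings into a common color set A of cardinality n+1, and let f be a chromatic simplicial map from C to D. Then f sends each facet of C to a facet of D, and the induced map on facets is a morphism of the associated Kripke frames: if facets F and F' of C share a vertex of color a, then the facets f(F) and f(F') of D share a vertex of color a. -/
/-- A facet of a simplicial complex (given as a family of finite sets of
vertices) is a maximal face. -/
def IsFacet {V : Type*} (C : Set (Finset V)) (F : Finset V) : Prop :=
  F ∈ C ∧ ∀ G ∈ C, F ⊆ G → F = G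

/-- A chromatic simplicial map `f` between pure chromatic simplicial
complexes of dimension `n` (colored by a common set `A` of cardinality `n+1`)
sends facets to facets, and the induced map on facets is a morphism of the
associated Kripke frames: if facets `F` and `F'` share a vertex of color `a`,
then so do the facets `f(F)` and `f(F')`. -/
theorem chromatic_simplicial_map_induces_kripke_morphism
    {V W A : Type*} [DecidableEq W] [Fintype A] (n : ℕ)
    (hA : Fintype.card A = n + 1)
    (C : Set (Finset V)) (D : Set (Finset W))
    (χC : V → A) (χD : W → A)
    -- both complexes are downward closed
    (hdcC : ∀ X ∈ C, ∀ Y : Finset V, Y ⊆ X → Y.Nonempty → Y ∈ C)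
    (hdcD : ∀ X ∈ D, ∀ Y : Finset W, Y ⊆ X → Y.Nonempty → Y ∈ D)
    -- both are chromatic: coloring injective on each face
    (hchromC : ∀ X ∈ C, ∀ u ∈ X, ∀ v ∈ X, χC u = χC v → u = v)
    (hchromD : ∀ X ∈ D, ∀ u ∈ X, ∀ v ∈ X, χD u = χD v → u = v)
    -- both are pure of dimension n
    (hpureC : ∀ F : Finset V, IsFacet C F → F.card = n + 1)
    (hpureD : ∀ F : Finset W, IsFacet D F → F.card = n + 1)
    -- f is a chromatic simplicial map
    (f : V → W)
    (hcolor : ∀ v : V, χD (f v) = χC v)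
    (hface : ∀ X ∈ C, X.image f ∈ D) :
    -- f sends facets to facets
    (∀ F : Finset V, IsFacet C F → IsFacet D (F.image f)) ∧
    -- the induced map on facets is a Kripke frame morphism
    (∀ (a : A) (F F' : Finset V), IsFacet C F → IsFacet C F' →
      (∃ v : V, v ∈ F ∧ v ∈ F' ∧ χC v = a) →
      ∃ w : W, w ∈ F.image f ∧ w ∈ F'.image f ∧ χD w = a) := by
  have : DecidableEq A := Classical.decEq A
  have hcardD : ∀ G ∈ D, G.card ≤ n + 1 := by
    intro G hG
    have hinj : Set.InjOn χD ↑G := fun u hu v hv h => hchromD G hG u hu v hv h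
    calc G.card = (G.image χD).card := (Finset.card_image_of_injOn hinj).symm
      _ ≤ Fintype.card A := Finset.card_le_univ _
      _ = n + 1 := hA
  constructor
  · intro F hF
    have hcard : F.card = n + 1 := hpureC F hF
    have hne : F.Nonempty := Finset.card_pos.mp (by omega)
    have hmem : F.image f ∈ D := hface F hF.1
    have hinjf : Set.InjOn f ↑F := by
      intro u hu v hv h
      exact hchromC F hF.1 u hu v hv (by rw [← hcolor, ← hcolor, h])
    have hcard' : (F.image f).card = n + 1 := by
      rw [Finset.card_image_of_injOn hinjf, hcard]
    refine ⟨hmem, fun G hG hsub => Finset.eq_of_subset_of_card_le hsub ?_⟩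
    rw [hcard']
    exact hcardD G hG
  · rintro a F F' _ _ ⟨v, hv, hv', hχ⟩
    exact ⟨f v, Finset.mem_image_of_mem f hv, Finset.mem_image_of_mem f hv',
      by rw [hcolor, hχ]⟩
end

section
/- Let n ≥ 0 and let act = [s_0, …, s_k] and act' = [s'_0, …, s'_{k'}] be two ordered partitions of the set {0, …, n} (i.e., lists of pairwise disjoint nonempty subsets whose union is {0, …, n}). For a process i, let view_i(act) = s_0 ∪ ⋯ ∪ s_j where j is the unique index with i ∈ s_j, and similarly for act'. If view_i(act) = view_i(act') for every i ∈ {0, …, n}, then act = act' (same length and equal corresponding concurrency classes). Consequently, the Kripke frame on ordered partitions with relations act ∼_i act' iff view_i(act) = view_i(act') is proper. -/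
/-- An ordered partition (block schedule of the one-round immediate snapshot
model) of `{0, …, n}` is a list of nonempty, pairwise disjoint subsets
(concurrency classes) whose union is the whole set. -/
def IsOrderedPartition {n : ℕ} (l : List (Finset (Fin (n + 1)))) : Prop :=
  (∀ s ∈ l, s.Nonempty) ∧
  l.Pairwise Disjoint ∧
  l.foldr (· ∪ ·) ∅ = Finset.univ

/-- The view of process `i` in an ordered partition `[s_0, …, s_k]` is
`s_0 ∪ ⋯ ∪ s_j`, where `s_j` is the concurrency class containing `i`
(and `∅` if no class contains `i`). -/
def view {n : ℕ} (i : Fin (n + 1)) :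
    List (Finset (Fin (n + 1))) → Finset (Fin (n + 1))
  | [] => ∅
  | s :: rest => if i ∈ s then s else s ∪ view i rest

/-!
Induct on the two lists simultaneously. A process `j` of the first class `s` sees exactly
`s` in the first partition, and its view in the second contains the first class `s'` there,
so `s' ⊆ s`; symmetrically `s ⊆ s'`. Once the heads agree, removing `s` from every view of a
process outside `s` yields its view in the tails, because `s` is disjoint from everything
that follows it.
-/

section FoldrUnion

variable {α : Type*} [DecidableEq α]

lemma disjoint_foldr_union {s : Finset α} {l : List (Finset α)} (h : ∀ t ∈ l, Disjoint s t) :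
    Disjoint s (l.foldr (· ∪ ·) ∅) := by
  induction l with
  | nil => simp
  | cons t rest ih =>
    simp only [List.foldr, Finset.disjoint_union_right]
    exact ⟨h t List.mem_cons_self, ih fun u hu => h u (List.mem_cons_of_mem _ hu)⟩

lemma eq_nil_of_foldr_union_eq_empty {l : List (Finset α)} (hne : ∀ s ∈ l, s.Nonempty)
    (h : l.foldr (· ∪ ·) ∅ = ∅) : l = [] := by
  cases l with
  | nil => rfl
  | cons s rest =>
    simp only [List.foldr, Finset.union_eq_empty] at h
    exact absurd h.1 (hne s List.mem_cons_self).ne_empty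

lemma foldr_union_eq_of_cons_eq {s : Finset α} {l l' : List (Finset α)}
    (hl : Disjoint s (l.foldr (· ∪ ·) ∅)) (hl' : Disjoint s (l'.foldr (· ∪ ·) ∅))
    (h : (s :: l).foldr (· ∪ ·) ∅ = (s :: l').foldr (· ∪ ·) ∅) :
    l.foldr (· ∪ ·) ∅ = l'.foldr (· ∪ ·) ∅ := by
  rw [← Finset.union_sdiff_cancel_left hl, ← Finset.union_sdiff_cancel_left hl']
  exact congrArg (· \ s) h

end FoldrUnion

section View

variable {n : ℕ} {i : Fin (n + 1)} {s : Finset (Fin (n + 1))} {l : List (Finset (Fin (n + 1)))}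

lemma view_cons_of_mem (h : i ∈ s) : view i (s :: l) = s := if_pos h

lemma view_cons_of_notMem (h : i ∉ s) : view i (s :: l) = s ∪ view i l := if_neg h

lemma subset_view_cons : s ⊆ view i (s :: l) := by
  by_cases h : i ∈ s
  · rw [view_cons_of_mem h]
  · rw [view_cons_of_notMem h]
    exact Finset.subset_union_left

lemma view_subset_foldr_union : view i l ⊆ l.foldr (· ∪ ·) ∅ := by
  induction l with
  | nil => exact Finset.empty_subset _
  | cons t rest ih =>
    by_cases h : i ∈ t
    · rw [view_cons_of_mem h]
      exact Finset.subset_union_left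
    · rw [view_cons_of_notMem h]
      exact Finset.union_subset_union subset_rfl ih

lemma view_eq_view_cons_sdiff (hs : Disjoint s (l.foldr (· ∪ ·) ∅)) (hi : i ∉ s) :
    view i l = view i (s :: l) \ s := by
  rw [view_cons_of_notMem hi, Finset.union_sdiff_cancel_left
    (hs.mono_right view_subset_foldr_union)]

end View

section Induction

variable {n : ℕ}

lemma head_subset_of_view_eq {s s' : Finset (Fin (n + 1))} {l l' : List (Finset (Fin (n + 1)))}
    (hs : s.Nonempty) (hview : ∀ i ∈ s, view i (s :: l) = view i (s' :: l')) : s' ⊆ s := by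
  obtain ⟨j, hj⟩ := hs
  calc s' ⊆ view j (s' :: l') := subset_view_cons
    _ = s := by rw [← hview j hj, view_cons_of_mem hj]

lemma eq_of_view_eq {act act' : List (Finset (Fin (n + 1)))}
    (hne : ∀ s ∈ act, s.Nonempty) (hne' : ∀ s ∈ act', s.Nonempty)
    (hdisj : act.Pairwise Disjoint) (hdisj' : act'.Pairwise Disjoint)
    (hunion : act.foldr (· ∪ ·) ∅ = act'.foldr (· ∪ ·) ∅)
    (hview : ∀ i ∈ act.foldr (· ∪ ·) ∅, view i act = view i act') :
    act = act' := by
  induction act generalizing act' with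
  | nil => exact (eq_nil_of_foldr_union_eq_empty hne' hunion.symm).symm
  | cons s rest ih =>
    cases act' with
    | nil => exact eq_nil_of_foldr_union_eq_empty hne hunion
    | cons s' rest' =>
      have hmem {i} (hi : i ∈ s) : i ∈ (s :: rest).foldr (· ∪ ·) ∅ :=
        Finset.mem_union_left _ hi
      have hmem' {i} (hi : i ∈ s') : i ∈ (s :: rest).foldr (· ∪ ·) ∅ :=
        hunion ▸ Finset.mem_union_left _ hi
      obtain rfl : s = s' := le_antisymm
        (head_subset_of_view_eq (hne' s' List.mem_cons_self)
          fun i hi => (hview i (hmem' hi)).symm)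
        (head_subset_of_view_eq (hne s List.mem_cons_self) fun i hi => hview i (hmem hi))
      have hds : Disjoint s (rest.foldr (· ∪ ·) ∅) :=
        disjoint_foldr_union (List.pairwise_cons.mp hdisj).1
      have hds' : Disjoint s (rest'.foldr (· ∪ ·) ∅) :=
        disjoint_foldr_union (List.pairwise_cons.mp hdisj').1
      congr 1
      refine ih (fun t ht => hne t (List.mem_cons_of_mem _ ht))
        (fun t ht => hne' t (List.mem_cons_of_mem _ ht))
        (List.pairwise_cons.mp hdisj).2 (List.pairwise_cons.mp hdisj').2
        (foldr_union_eq_of_cons_eq hds hds' hunion) fun i hi => ?_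
      have his : i ∉ s := Finset.disjoint_right.mp hds hi
      rw [view_eq_view_cons_sdiff hds his, view_eq_view_cons_sdiff hds' his,
        hview i (Finset.mem_union_right _ hi)]

end Induction

/-- If two ordered partitions of `{0, …, n}` give every process the same
view, then they are equal. Consequently, the Kripke frame on ordered
partitions with `act ∼_i act'` iff `view_i(act) = view_i(act')` is proper. -/
theorem ordered_partition_eq_of_views_eq
    {n : ℕ} (act act' : List (Finset (Fin (n + 1))))
    (hact : IsOrderedPartition act) (hact' : IsOrderedPartition act')
    (hview : ∀ i : Fin (n + 1), view i act = view i act') :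
    act = act' :=
  eq_of_view_eq hact.1 hact'.1 hact.2.1 hact'.2.1 (hact.2.2.trans hact'.2.2.symm)
    fun i _ => hview i
end
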